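/- arXiv:1508.00512 — 2 statements merged into one kernel-verified Lean document; each statement's English description precedes it below -/
import Mathlib

section
/- Let m ≥ 1 and let φ : ℤ/mℤ → ℂ. For any interval I ⊂ ℤ of cardinality at most m, the partial sum S(φ,I) = Σ_{n∈I} φ(n) satisfies |S(φ,I)| ≤ ‖φ̂‖_∞ · Σ_{h mod m} |1̂_Ĩ(h)| ≤ ‖φ̂‖_∞ · m^{1/2} · log(3m), where φ̂(h) = (1/√m) Σ_{x mod m} φ(x) e(hx/m) and 1̂_Ĩ is the normalized Fourier transform of the characteristic function of the image of I in ℤ/mℤ. -/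
open scoped BigOperators

noncomputable def eAdd (m : ℕ) (t : ℤ) : ℂ := Complex.exp (2 * Real.pi * Complex.I * t / m)

noncomputable def dft (m : ℕ) (φ : ℤ → ℂ) (h : ℤ) : ℂ :=
  (1 / Real.sqrt m) * ∑ x ∈ Finset.range m, φ x * eAdd m (h * x)

noncomputable def supNorm (m : ℕ) (f : ℤ → ℂ) : ℝ :=
  (((Finset.range m).sup fun x => ‖f (x : ℤ)‖₊ : NNReal) : ℝ)

/-!
Fourier inversion on `ℤ/mℤ` gives `S(φ, I) = ∑ₕ φ̂(h) · conj (1̂_I(h))`, whence the first bound.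
For the second, the term `h = 0` is `|I| ≤ m`; for `0 < h < m` the geometric sum over `I` is at
most `1 / sin (π h / m) ≤ (m / π) (1 / h + 1 / (m - h))`, by `sin (π x) ≥ π x (1 - x)` on `[0, 1]`.
Summing gives `m (1 + (2 / π) H_{m-1})`, and `H_{m-1} < log m + γ` with `γ < 2 / 3` bounds this by
`m log (3 m)`.
-/

open Finset Complex ComplexConjugate
open scoped Real

lemma eAdd_eq_exp_I_mul (m : ℕ) (t : ℤ) : eAdd m t = exp (I * ↑(2 * π * t / m)) := by
  rw [eAdd]; push_cast; ring_nf

lemma norm_eAdd (m : ℕ) (t : ℤ) : ‖eAdd m t‖ = 1 := by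
  rw [eAdd_eq_exp_I_mul, norm_exp_I_mul_ofReal]

lemma norm_eAdd_sub_one (m : ℕ) (t : ℤ) : ‖eAdd m t - 1‖ = 2 * |Real.sin (π * t / m)| := by
  rw [eAdd_eq_exp_I_mul, norm_exp_I_mul_ofReal_sub_one, norm_mul, Real.norm_two,
    Real.norm_eq_abs]
  ring_nf

lemma eAdd_neg (m : ℕ) (t : ℤ) : eAdd m (-t) = conj (eAdd m t) := by
  rw [eAdd_eq_exp_I_mul, eAdd_eq_exp_I_mul, ← exp_conj, map_mul, conj_I, conj_ofReal]
  push_cast; ring_nf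

lemma eAdd_add (m : ℕ) (s t : ℤ) : eAdd m (s + t) = eAdd m s * eAdd m t := by
  rw [eAdd, eAdd, eAdd, ← exp_add]; push_cast; ring_nf

lemma eAdd_mul (m : ℕ) (s t : ℤ) : eAdd m (s * t) = eAdd m s ^ t := by
  rw [eAdd, eAdd, ← exp_int_mul]; push_cast; ring_nf

lemma isPrimitiveRoot_eAdd_one {m : ℕ} (hm : m ≠ 0) : IsPrimitiveRoot (eAdd m 1) m := by
  simpa [eAdd] using isPrimitiveRoot_exp m hm

lemma eAdd_eq_one_iff {m : ℕ} (hm : m ≠ 0) (t : ℤ) : eAdd m t = 1 ↔ (m : ℤ) ∣ t := by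
  rw [← (isPrimitiveRoot_eAdd_one hm).zpow_eq_one_iff_dvd, ← eAdd_mul, one_mul]

lemma sum_range_eAdd_mul {m : ℕ} (hm : m ≠ 0) (d : ℤ) :
    ∑ h ∈ range m, eAdd m (h * d) = if (m : ℤ) ∣ d then (m : ℂ) else 0 := by
  simp_rw [mul_comm _ d, eAdd_mul, zpow_natCast]
  split_ifs with hd
  · simp [(eAdd_eq_one_iff hm d).2 hd]
  · rw [geom_sum_eq (mt (eAdd_eq_one_iff hm d).1 hd), ← zpow_natCast, ← eAdd_mul,
      (eAdd_eq_one_iff hm _).2 (dvd_mul_left _ _), sub_self, zero_div]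

section FourierInversion

variable {m : ℕ} {φ : ℤ → ℂ}

lemma sum_range_mul_ite_dvd_sub (hm : m ≠ 0) (hφ : Function.Periodic φ m) (n : ℤ) :
    ∑ x ∈ range m, φ x * (if (m : ℤ) ∣ x - n then 1 else 0) = φ n := by
  have hm' : (0 : ℤ) < m := by exact_mod_cast Nat.pos_of_ne_zero hm
  have hrep : ((n % m).toNat : ℤ) = n % m := Int.toNat_of_nonneg (Int.emod_nonneg n hm'.ne')
  have hlt := Int.emod_lt_of_pos n hm'
  rw [sum_eq_single_of_mem (n % m).toNat (mem_range.2 (by omega))]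
  · rw [if_pos (by rw [hrep, Int.emod_def]; exact ⟨-(n / m), by ring⟩), mul_one, hrep,
      Int.emod_def, mul_comm]
    simpa using hφ.sub_int_mul_eq (x := n) (n / m)
  · intro x hx hne
    rw [if_neg, mul_zero]
    intro hdvd
    have hcong : (x : ℤ) % m = n % m :=
      Int.emod_eq_emod_iff_emod_sub_eq_zero.2 (Int.emod_eq_zero_of_dvd hdvd)
    have hx : (x : ℤ) % m = x :=
      Int.emod_eq_of_lt (Int.natCast_nonneg x) (by exact_mod_cast mem_range.1 hx)
    omega

lemma one_div_sqrt_mul_one_div_sqrt (hm : m ≠ 0) :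
    (1 / (Real.sqrt m : ℂ)) * (1 / (Real.sqrt m : ℂ)) * m = 1 := by
  rw [div_mul_div_comm, one_mul, ← ofReal_mul, Real.mul_self_sqrt (Nat.cast_nonneg m),
    ofReal_natCast, one_div_mul_cancel (Nat.cast_ne_zero.2 hm)]

theorem dft_inversion (hm : m ≠ 0) (hφ : Function.Periodic φ m) (n : ℤ) :
    φ n = (1 / Real.sqrt m) * ∑ h ∈ range m, dft m φ h * eAdd m (-(h * n)) := by
  calc φ n = ∑ x ∈ range m, φ x * (if (m : ℤ) ∣ x - n then 1 else 0) :=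
        (sum_range_mul_ite_dvd_sub hm hφ n).symm
    _ = (1 / Real.sqrt m) * (1 / Real.sqrt m) *
          ∑ x ∈ range m, φ x * ∑ h ∈ range m, eAdd m (h * (x - n)) := by
        simp_rw [sum_range_eAdd_mul hm, mul_sum]
        refine sum_congr rfl fun x _ => ?_
        split_ifs
        · linear_combination φ x * (one_div_sqrt_mul_one_div_sqrt hm).symm
        · simp
    _ = _ := by
        simp_rw [dft, mul_assoc, mul_sum, sum_mul, mul_sum]
        rw [sum_comm]
        refine sum_congr rfl fun h _ => sum_congr rfl fun x _ => ?_
        rw [mul_sub, sub_eq_add_neg, eAdd_add]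
        ring

lemma norm_le_supNorm (f : ℤ → ℂ) {x : ℕ} (hx : x ∈ range m) : ‖f x‖ ≤ supNorm m f := by
  rw [supNorm, ← coe_nnnorm, NNReal.coe_le_coe]
  exact le_sup (f := fun x : ℕ => ‖f x‖₊) hx

lemma norm_sum_eAdd_neg (m : ℕ) (s : Finset ℤ) (g : ℤ → ℤ) :
    ‖∑ n ∈ s, eAdd m (-g n)‖ = ‖∑ n ∈ s, eAdd m (g n)‖ := by
  simp_rw [eAdd_neg, ← map_sum, norm_conj]

lemma sum_eq_sum_dft_mul (hm : m ≠ 0) (hφ : Function.Periodic φ m) (s : Finset ℤ) :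
    ∑ n ∈ s, φ n =
      ∑ h ∈ range m, dft m φ h * ((1 / Real.sqrt m) * ∑ n ∈ s, eAdd m (-(h * n))) := by
  conv_lhs => enter [2, n]; rw [dft_inversion hm hφ n]
  simp_rw [mul_sum]
  rw [sum_comm]
  exact sum_congr rfl fun h _ => sum_congr rfl fun n _ => by ring

theorem norm_sum_le_supNorm_dft_mul (hm : m ≠ 0) (hφ : Function.Periodic φ m)
    (s : Finset ℤ) :
    ‖∑ n ∈ s, φ n‖ ≤
      supNorm m (dft m φ) * ∑ h ∈ range m, ‖(1 / Real.sqrt m) * ∑ x ∈ s, eAdd m (h * x)‖ := by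
  rw [sum_eq_sum_dft_mul hm hφ, mul_sum]
  refine (norm_sum_le _ _).trans (sum_le_sum fun h hh => ?_)
  rw [norm_mul, norm_mul, norm_mul, norm_sum_eAdd_neg m s (fun n => h * n)]
  exact mul_le_mul_of_nonneg_right (norm_le_supNorm _ hh) (by positivity)

end FourierInversion

section GeometricSums

variable {K : Type*}

lemma sub_one_mul_sum_Icc_zpow [Field K] {z : K} (hz : z ≠ 0) {a b : ℤ}
    (hab : a ≤ b + 1) : (z - 1) * ∑ x ∈ Icc a b, z ^ x = z ^ (b + 1) - z ^ a := by
  obtain ⟨k, rfl⟩ : ∃ k : ℕ, b = a - 1 + k := ⟨(b - (a - 1)).toNat, by omega⟩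
  induction k with
  | zero => simp
  | succ k ih =>
    rw [Nat.cast_succ, ← add_assoc, ← insert_Icc_right_eq_Icc_add_one (by omega),
      sum_insert (by simp), mul_add, ih (by omega), zpow_add_one₀ hz (_ + 1)]
    ring

lemma norm_sum_Icc_zpow_le [NormedField K] {z : K} (hz : ‖z‖ = 1) (hz1 : z ≠ 1) (a b : ℤ) :
    ‖∑ x ∈ Icc a b, z ^ x‖ ≤ 2 / ‖z - 1‖ := by
  rcases lt_or_ge b a with hba | hab
  · rw [Icc_eq_empty_of_lt hba, sum_empty, norm_zero]
    positivity
  have hz0 : z ≠ 0 := norm_ne_zero_iff.1 (by rw [hz]; exact one_ne_zero)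
  have hsub : z - 1 ≠ 0 := sub_ne_zero.2 hz1
  rw [eq_div_of_mul_eq hsub ((mul_comm _ _).trans (sub_one_mul_sum_Icc_zpow hz0 (by omega))),
    norm_div]
  gcongr
  calc ‖z ^ (b + 1) - z ^ a‖ ≤ ‖z ^ (b + 1)‖ + ‖z ^ a‖ := norm_sub_le _ _
    _ = 2 := by rw [norm_zpow, norm_zpow, hz, one_zpow, one_zpow, one_add_one_eq_two]

end GeometricSums

lemma norm_sum_Icc_eAdd_mul_le {m h : ℕ} (h0 : 0 < h) (hm : h < m) (a b : ℤ) :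
    ‖∑ x ∈ Icc a b, eAdd m (h * x)‖ ≤ (Real.sin (π * h / m))⁻¹ := by
  have hne : eAdd m h ≠ 1 := fun h1 => by
    have := Int.le_of_dvd (by omega) ((eAdd_eq_one_iff (by omega) h).1 h1)
    omega
  have hm' : (0 : ℝ) < m := by exact_mod_cast h0.trans hm
  have hsin : 0 < Real.sin (π * h / m) := by
    apply Real.sin_pos_of_pos_of_lt_pi (by positivity)
    rw [mul_div_assoc]
    exact mul_lt_of_lt_one_right Real.pi_pos ((div_lt_one hm').2 (by exact_mod_cast hm))
  simp_rw [eAdd_mul]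
  refine (norm_sum_Icc_zpow_le (norm_eAdd m h) hne a b).trans_eq ?_
  rw [norm_eAdd_sub_one, Int.cast_natCast, abs_of_pos hsin]
  field_simp

lemma pi_mul_mul_one_sub_le_sin {x : ℝ} (h0 : 0 ≤ x) (h1 : x ≤ 1) :
    π * x * (1 - x) ≤ Real.sin (π * x) := by
  -- On `[0, 1/2]` the cubic Taylor bound `sin y ≥ y - y³/6` suffices since `π² / 2 < 6`.
  have half : ∀ y : ℝ, 0 ≤ y → y ≤ 1 / 2 → π * y * (1 - y) ≤ Real.sin (π * y) := by
    intro y hy0 hy1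
    have hcube := Real.sin_ge_sub_cube (mul_nonneg Real.pi_pos.le hy0)
    have hpi2 : π ^ 2 * y ≤ 6 := by nlinarith [Real.pi_lt_d2, Real.pi_pos]
    nlinarith [mul_nonneg (mul_nonneg Real.pi_pos.le (sq_nonneg y)) (sub_nonneg.2 hpi2)]
  rcases le_total x (1 / 2) with hx | hx
  · exact half x h0 hx
  · calc π * x * (1 - x) = π * (1 - x) * (1 - (1 - x)) := by ring
      _ ≤ Real.sin (π * (1 - x)) := half (1 - x) (by linarith) (by linarith)
      _ = Real.sin (π * x) := by rw [mul_one_sub, Real.sin_pi_sub]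

lemma inv_sin_pi_mul_le {t : ℝ} (h0 : 0 < t) (h1 : t < 1) :
    (Real.sin (π * t))⁻¹ ≤ π⁻¹ * (t⁻¹ + (1 - t)⁻¹) := by
  have h1' : 0 < 1 - t := sub_pos.2 h1
  calc (Real.sin (π * t))⁻¹ ≤ (π * t * (1 - t))⁻¹ :=
        inv_anti₀ (by positivity) (pi_mul_mul_one_sub_le_sin h0.le h1.le)
    _ = π⁻¹ * (t⁻¹ + (1 - t)⁻¹) := by field_simp; ring

lemma sum_Ico_norm_sum_Icc_eAdd_le (m : ℕ) (a b : ℤ) :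
    ∑ h ∈ Ico 1 m, ‖∑ x ∈ Icc a b, eAdd m (h * x)‖ ≤ 2 * m / π * ∑ h ∈ Ico 1 m, (h : ℝ)⁻¹ := by
  calc ∑ h ∈ Ico 1 m, ‖∑ x ∈ Icc a b, eAdd m (h * x)‖
      ≤ ∑ h ∈ Ico 1 m, m / π * ((h : ℝ)⁻¹ + ((m - h : ℕ) : ℝ)⁻¹) := by
        refine sum_le_sum fun h hh => ?_
        obtain ⟨h1, hm⟩ := mem_Ico.1 hh
        have hm' : (0 : ℝ) < m := by exact_mod_cast Nat.zero_lt_of_lt hm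
        have hhm : (h : ℝ) < m := by exact_mod_cast hm
        refine (norm_sum_Icc_eAdd_mul_le h1 hm a b).trans ?_
        have := inv_sin_pi_mul_le (t := h / m) (by positivity) ((div_lt_one hm').2 hhm)
        rw [mul_div_assoc]
        refine this.trans_eq ?_
        rw [Nat.cast_sub hm.le]
        field_simp
    _ = 2 * m / π * ∑ h ∈ Ico 1 m, (h : ℝ)⁻¹ := by
        rw [← mul_sum, sum_add_distrib,
          sum_Ico_reflect (fun h : ℕ => (h : ℝ)⁻¹) 1 (Nat.le_succ m), Nat.add_sub_cancel_left,
          Nat.add_sub_cancel]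
        ring

lemma sum_Ico_inv_lt_log_add (m : ℕ) (hm : m ≠ 0) :
    ∑ h ∈ Ico 1 m, (h : ℝ)⁻¹ < Real.log m + 2 / 3 := by
  obtain ⟨n, rfl⟩ := Nat.exists_eq_add_one_of_ne_zero hm
  have := (Real.eulerMascheroniSeq_lt_eulerMascheroniConstant n).trans
    Real.eulerMascheroniConstant_lt_two_thirds
  rw [Real.eulerMascheroniSeq, harmonic_eq_sum_Icc, ← Finset.Ico_add_one_right_eq_Icc] at this
  push_cast at this ⊢
  linarith

lemma one_add_two_div_pi_mul_sum_Ico_inv_le_log {m : ℕ} (hm : m ≠ 0) :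
    1 + 2 / π * ∑ h ∈ Ico 1 m, (h : ℝ)⁻¹ ≤ Real.log (3 * m) := by
  have hl3 := Real.log_three_gt_d9
  have hπ := Real.pi_gt_d2
  rw [Real.log_mul (by norm_num) (by exact_mod_cast hm)]
  -- `H_{m-1} < log m + 2/3` is too weak for `m ≤ 2`, where the sum is computed exactly.
  obtain rfl | rfl | hm3 : m = 1 ∨ m = 2 ∨ 3 ≤ m := by omega
  · simp only [Ico_self, sum_empty, mul_zero, add_zero, Nat.cast_one, Real.log_one]
    linarith
  · have hl2 := Real.log_two_gt_d9
    have : 2 / π ≤ 0.64 := by rw [div_le_iff₀ (by positivity)]; linarith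
    rw [show Ico 1 2 = {1} from rfl, sum_singleton, Nat.cast_one, inv_one, mul_one,
      Nat.cast_ofNat]
    linarith
  · set L := Real.log m
    have hL : Real.log 3 ≤ L := Real.log_le_log (by norm_num) (by exact_mod_cast hm3)
    have hS := sum_Ico_inv_lt_log_add m hm
    have key : 2 * (L + 2 / 3) ≤ (Real.log 3 + L - 1) * π := by
      nlinarith [mul_le_mul_of_nonneg_left hL (by linarith : (0 : ℝ) ≤ π - 2),
        mul_le_mul_of_nonneg_right hπ.le (by linarith : (0 : ℝ) ≤ 2 * Real.log 3 - 1)]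
    have hSπ : 2 / π * ∑ h ∈ Ico 1 m, (h : ℝ)⁻¹ ≤ 2 / π * (L + 2 / 3) := by gcongr
    have : 2 / π * (L + 2 / 3) ≤ Real.log 3 + L - 1 := by
      rw [div_mul_eq_mul_div, div_le_iff₀ Real.pi_pos]; linarith
    linarith

theorem sum_range_norm_sum_Icc_eAdd_le {m : ℕ} (hm : m ≠ 0) {a b : ℤ} (hcard : #(Icc a b) ≤ m) :
    ∑ h ∈ range m, ‖∑ x ∈ Icc a b, eAdd m (h * x)‖ ≤ m * Real.log (3 * m) := by
  rw [range_eq_Ico, sum_eq_sum_Ico_succ_bot (Nat.pos_of_ne_zero hm)]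
  have hzero : ‖∑ x ∈ Icc a b, eAdd m ((0 : ℕ) * x)‖ = #(Icc a b) := by simp [eAdd]
  calc _ ≤ (m : ℝ) + 2 * m / π * ∑ h ∈ Ico 1 m, (h : ℝ)⁻¹ :=
        add_le_add (hzero.trans_le (by exact_mod_cast hcard)) (sum_Ico_norm_sum_Icc_eAdd_le m a b)
    _ = m * (1 + 2 / π * ∑ h ∈ Ico 1 m, (h : ℝ)⁻¹) := by ring
    _ ≤ m * Real.log (3 * m) := by gcongr; exact one_add_two_div_pi_mul_sum_Ico_inv_le_log hm

/-- Pólya–Vinogradov completion bound. -/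
theorem stmt0 (m : ℕ) (hm : 1 ≤ m) (φ : ℤ → ℂ)
    (hper : ∀ n : ℤ, φ (n + m) = φ n) (a b : ℤ)
    (hcard : (Finset.Icc a b).card ≤ m) :
    ‖∑ n ∈ Finset.Icc a b, φ n‖
      ≤ supNorm m (dft m φ) *
        ∑ h ∈ Finset.range m,
          ‖(1 / Real.sqrt m) * ∑ x ∈ Finset.Icc a b, eAdd m (h * x)‖ ∧
    ∑ h ∈ Finset.range m,
        ‖(1 / Real.sqrt m) * ∑ x ∈ Finset.Icc a b, eAdd m (h * x)‖
      ≤ Real.sqrt m * Real.log (3 * m) := by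
  have hm0 : m ≠ 0 := Nat.one_le_iff_ne_zero.1 hm
  refine ⟨norm_sum_le_supNorm_dft_mul hm0 hper _, ?_⟩
  have hsqrt : ‖(1 / Real.sqrt m : ℂ)‖ = 1 / Real.sqrt m := by
    rw [← ofReal_one, ← ofReal_div, norm_real, Real.norm_of_nonneg (by positivity)]
  simp_rw [norm_mul, hsqrt, ← mul_sum]
  calc 1 / Real.sqrt m * ∑ h ∈ range m, ‖∑ x ∈ Icc a b, eAdd m (h * x)‖
      ≤ 1 / Real.sqrt m * (m * Real.log (3 * m)) := by
        gcongr; exact sum_range_norm_sum_Icc_eAdd_le hm0 hcard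
    _ = Real.sqrt m * Real.log (3 * m) := by rw [← mul_assoc, one_div_mul_eq_div, Real.div_sqrt]
end

section
/- Let I be a finite index set and B : I → ℝ with |B(n)| ≤ 2 for all n. Suppose Σ_{n∈I} B(n) = o(|I|) and Σ_{n∈I} B(n)^2 = (1+o(1))|I|. Then for any 0 ≤ t < 1/2: min( #{n∈I : B(n) > t}, #{n∈I : B(n) < −t} ) ≥ ((1−2t)/(4(2−t)) + o(1)) |I|. -/
/-!
For `|b| ≤ 2` the quadratic `(b + t)(b - 2)` is `≤ 0` on `[-t, 2]` and at most `4(2 - t)`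
(its value at `b = -2`) below `-t`. Summing over `I` bounds
`∑ B² - (2 - t) ∑ B - 2t|I|` by `4(2 - t) · #{B < -t}`; the moment hypotheses make the left side
at least `(1 - 2t - (3 - t)ε)|I|`. Applying this to `-B` gives the bound for `#{B > t}`.
-/

open Finset

lemma mul_sub_two_le_ite {b : ℝ} (t : ℝ) (hb : |b| ≤ 2) :
    (b + t) * (b - 2) ≤ if b < -t then 4 * (2 - t) else 0 := by
  obtain ⟨hb₁, hb₂⟩ := abs_le.mp hb
  split_ifs with h <;> nlinarith

lemma sum_sq_sub_le_card_filter_lt_neg {α : Type*} (I : Finset α) (B : α → ℝ) (t : ℝ)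
    (hB : ∀ n ∈ I, |B n| ≤ 2) :
    ∑ n ∈ I, B n ^ 2 - (2 - t) * ∑ n ∈ I, B n - 2 * t * #I
      ≤ 4 * (2 - t) * #(I.filter fun n => B n < -t) :=
  calc ∑ n ∈ I, B n ^ 2 - (2 - t) * ∑ n ∈ I, B n - 2 * t * #I
      = ∑ n ∈ I, (B n ^ 2 - (2 - t) * B n - 2 * t) := by
        rw [sum_sub_distrib, sum_sub_distrib, ← mul_sum, sum_const, nsmul_eq_mul]
        ring
    _ = ∑ n ∈ I, (B n + t) * (B n - 2) := sum_congr rfl fun n _ => by ring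
    _ ≤ ∑ n ∈ I, if B n < -t then 4 * (2 - t) else 0 :=
        sum_le_sum fun n hn => mul_sub_two_le_ite t (hB n hn)
    _ = 4 * (2 - t) * #(I.filter fun n => B n < -t) := by
        rw [sum_ite, sum_const_zero, sum_const, nsmul_eq_mul, add_zero, mul_comm]

/-- The error term `(3 - t) ε / (4 (2 - t))` is at most `ε` since `t < 1 / 2`. -/
lemma card_filter_lt_neg_ge {α : Type*} (I : Finset α) (B : α → ℝ) {ε t : ℝ}
    (hε : 0 ≤ ε) (ht : t < 1 / 2) (hB : ∀ n ∈ I, |B n| ≤ 2)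
    (hsum : ∑ n ∈ I, B n ≤ ε * #I) (hsq : (1 - ε) * #I ≤ ∑ n ∈ I, B n ^ 2) :
    ((1 - 2 * t) / (4 * (2 - t)) - ε) * #I ≤ #(I.filter fun n => B n < -t) := by
  have hpos : 0 < 4 * (2 - t) := by linarith
  have hmoment := sum_sq_sub_le_card_filter_lt_neg I B t hB
  have hN : (0 : ℝ) ≤ #I := Nat.cast_nonneg _
  rw [sub_mul, div_mul_eq_mul_div, sub_le_iff_le_add, div_le_iff₀ hpos]
  nlinarith [mul_nonneg hε hN]

/-- Distribution lemma: positive proportion of values above t and below −t. -/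
theorem stmt13 :
    ∃ C : ℝ, 0 < C ∧
      ∀ {α : Type} (I : Finset α) (B : α → ℝ) (ε t : ℝ),
        0 ≤ ε → 0 ≤ t → t < 1 / 2 →
        (∀ n ∈ I, |B n| ≤ 2) →
        |∑ n ∈ I, B n| ≤ ε * I.card →
        |(∑ n ∈ I, (B n) ^ 2) - I.card| ≤ ε * I.card →
        ((1 - 2 * t) / (4 * (2 - t)) - C * ε) * I.card
          ≤ min ((I.filter fun n => t < B n).card : ℝ)
              ((I.filter fun n => B n < -t).card : ℝ) := by
  refine ⟨1, one_pos, fun I B ε t hε _ ht hB hsum hsq => ?_⟩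
  rw [one_mul]
  have hsq' : (1 - ε) * #I ≤ ∑ n ∈ I, B n ^ 2 := by linarith [(abs_le.mp hsq).1]
  refine le_min ?_ (card_filter_lt_neg_ge I B hε ht hB (abs_le.mp hsum).2 hsq')
  have hneg := card_filter_lt_neg_ge I (fun n => -B n) hε ht
    (fun n hn => (abs_neg (B n)).trans_le (hB n hn))
    (by rw [sum_neg_distrib]; linarith [(abs_le.mp hsum).1])
    (by simpa only [neg_sq] using hsq')
  simpa only [neg_lt_neg_iff] using hneg
end
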